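/- The poset C(m,n) of good rectangular preorders on Coll(m,n), ordered by refinement and with a formal minimal element adjoined, is a lattice: any two elements have a join and a meet. -/

import Mathlib

/-- `Coll m n` is the set of collisions: vertical collisions `mᵢ` for `1 ≤ i < m`
(encoded `Sum.inl`) and horizontal collisions `lⱼ` for `1 ≤ j < n` (encoded `Sum.inr`). -/
abbrev Coll (m n : ℕ) := Fin (m - 1) ⊕ Fin (n - 1)

/-- A vertical and a horizontal collision are orthogonal. -/
def Orthogonal {m n : ℕ} : Coll m n → Coll m n → Prop
  | Sum.inl _, Sum.inr _ => True
  | Sum.inr _, Sum.inl _ => True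
  | _, _ => False

/-- Two distinct collisions of the same kind are parallel. -/
def Parallel {m n : ℕ} : Coll m n → Coll m n → Prop
  | Sum.inl i, Sum.inl j => i ≠ j
  | Sum.inr i, Sum.inr j => i ≠ j
  | _, _ => False

/-- `Between x y g`: `g` is a collision parallel to `x` and `y` whose index lies in the
interval spanned by the indices of `x` and `y`. -/
def Between {m n : ℕ} : Coll m n → Coll m n → Coll m n → Prop
  | Sum.inl i, Sum.inl j, Sum.inl s => min i j ≤ s ∧ s ≤ max i j
  | Sum.inr i, Sum.inr j, Sum.inr s => min i j ≤ s ∧ s ≤ max i j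
  | _, _, _ => False

/-- Strict comparison in a preorder `R`. -/
def StrictR {m n : ℕ} (R : Coll m n → Coll m n → Prop) (x y : Coll m n) : Prop :=
  R x y ∧ ¬ R y x

/-- `z` is an orthogonal link between the parallel collisions `x` and `y`:
`z` is orthogonal to them and `x ≤ z ≤ y` or `y ≤ z ≤ x`. -/
def IsLink {m n : ℕ} (R : Coll m n → Coll m n → Prop) (x y z : Coll m n) : Prop :=
  Orthogonal x z ∧ ((R x z ∧ R z y) ∨ (R y z ∧ R z x))

/-- `g` is a gap between the parallel collisions `x` and `y`: its index is between theirs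
and `x < g > y` strictly. -/
def IsGap {m n : ℕ} (R : Coll m n → Coll m n → Prop) (x y g : Coll m n) : Prop :=
  Between x y g ∧ StrictR R x g ∧ StrictR R y g

/-- A good rectangular preorder on `Coll m n`: a reflexive transitive relation such that
orthogonal collisions are always comparable, and parallel collisions are comparable iff
there is an orthogonal link between them or there is no gap between them. -/
structure IsGoodRect {m n : ℕ} (R : Coll m n → Coll m n → Prop) : Prop where
  refl : ∀ x, R x x
  trans : ∀ x y z, R x y → R y z → R x z
  orth : ∀ x y, Orthogonal x y → R x y ∨ R y x
  par : ∀ x y, Parallel x y →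
    ((R x y ∨ R y x) ↔ ((∃ z, IsLink R x y z) ∨ ¬ ∃ g, IsGap R x y g))

/-- `P` refines `Q`: every comparison of `P` holds in `Q`. -/
def Refines {m n : ℕ} (P Q : Coll m n → Coll m n → Prop) : Prop :=
  ∀ x y, P x y → Q x y

/-- A vertex preorder: a good rectangular preorder in which equivalence implies equality. -/
def IsVertexP {m n : ℕ} (R : Coll m n → Coll m n → Prop) : Prop :=
  IsGoodRect R ∧ ∀ x y, R x y → R y x → x = y

/-- An edge preorder: a good rectangular preorder with exactly one equivalence class of
size two (the pair `{a,b}`), all other classes being singletons. -/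
def IsEdgeP {m n : ℕ} (R : Coll m n → Coll m n → Prop) : Prop :=
  IsGoodRect R ∧ ∃ a b : Coll m n, a ≠ b ∧ R a b ∧ R b a ∧
    ∀ x y : Coll m n, x ≠ y → R x y → R y x → (x = a ∧ y = b) ∨ (x = b ∧ y = a)

/-- The poset of good rectangular preorders on `Coll m n`, ordered by refinement. -/
def GoodRect (m n : ℕ) := {R : Coll m n → Coll m n → Prop // IsGoodRect R}

noncomputable instance (m n : ℕ) : PartialOrder (GoodRect m n) :=
  Subtype.partialOrder _

/-!
The join of two good preorders `P`, `Q` is the reflexive-transitive closure of `P ∪ Q`. The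
only nontrivial point is that a parallel pair `x ≤ y` of the closure without an orthogonal
link has no gap: a path from `x` to `y` either meets a collision orthogonal to a given `g`
between them (producing a link) or makes a single step `u ≤ v` of `P` (say) over `g`, and in
a good preorder such a step without link forces `g ≤ u` or `g ≤ v`, whence `g ≤ y`.
Good preorders thus form a finite join-semilattice; once a bottom element is adjoined, the
meet of two elements is the join of their common lower bounds.
-/

open Relation Set

lemma exists_maximal_of_refl_of_trans {α : Type*} [Finite α] {R : α → α → Prop}
    (refl : ∀ x, R x x) (trans : ∀ x y z, R x y → R y z → R x z) {s : Set α}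
    (hs : s.Nonempty) : ∃ x ∈ s, ∀ y ∈ s, R x y → R y x :=
  letI : Preorder α := { le := R, le_refl := refl, le_trans := trans }
  let ⟨x, hx⟩ := s.toFinite.exists_maximal hs
  ⟨x, hx.1, fun _ hy hxy => hx.2 hy hxy⟩

theorem exists_isGLB_of_finite {α : Type*} [SemilatticeSup α] [OrderBot α] [Finite α]
    (s : Set α) : ∃ k, IsGLB s k := by
  have hs := (lowerBounds s).toFinite
  have hsup := Finset.isLUB_sup_id (s := hs.toFinset)
  rw [hs.coe_toFinset] at hsup
  exact ⟨_, isLUB_lowerBounds.1 hsup⟩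

section Collisions

variable {m n : ℕ} {x y z g h : Coll m n}

lemma between_inl_iff {i j s : Fin (m - 1)} :
    Between (m := m) (n := n) (.inl i) (.inl j) (.inl s) ↔ s ∈ uIcc i j := Iff.rfl

lemma between_inr_iff {i j s : Fin (n - 1)} :
    Between (m := m) (n := n) (.inr i) (.inr j) (.inr s) ↔ s ∈ uIcc i j := Iff.rfl

lemma orthogonal_iff_isLeft_ne : Orthogonal x y ↔ x.isLeft ≠ y.isLeft := by
  rcases x with _ | _ <;> rcases y with _ | _ <;> simp [Orthogonal]

lemma parallel_iff_isLeft_eq : Parallel x y ↔ x.isLeft = y.isLeft ∧ x ≠ y := by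
  rcases x with _ | _ <;> rcases y with _ | _ <;> simp [Parallel]

lemma Between.isLeft_eq (hg : Between x y g) : g.isLeft = x.isLeft ∧ y.isLeft = x.isLeft := by
  rcases x with _ | _ <;> rcases y with _ | _ <;> rcases g with _ | _ <;>
    first | exact hg.elim | exact ⟨rfl, rfl⟩

lemma Between.symm (hg : Between x y g) : Between y x g := by
  rcases x with _ | _ <;> rcases y with _ | _ <;> rcases g with _ | _ <;>
    first | exact hg.elim | rwa [between_inl_iff, uIcc_comm] | rwa [between_inr_iff, uIcc_comm]

lemma Between.eq_of_self (hg : Between x x g) : g = x := by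
  rcases x with _ | _ <;> rcases g with _ | _ <;>
    first | exact hg.elim | simpa [between_inl_iff] using hg | simpa [between_inr_iff] using hg

lemma Between.trans_left (hg : Between x y g) (hh : Between x g h) : Between x y h := by
  rcases x with _ | _ <;> rcases y with _ | _ <;> rcases g with _ | _ <;> rcases h with _ | _ <;>
    first | exact hg.elim | exact hh.elim | exact uIcc_subset_uIcc_left hg hh

lemma Between.split (hg : Between x y g) (z : Coll m n) :
    Orthogonal x z ∨ Between x z g ∨ Between z y g := by
  rcases x with _ | _ <;> rcases y with _ | _ <;> rcases g with _ | _ <;> rcases z with _ | _ <;>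
    first | exact hg.elim | exact Or.inl trivial | exact Or.inr (uIcc_subset_uIcc_union_uIcc hg)

lemma Between.parallel (hg : Between x y g) (hxy : x ≠ y) : Parallel x y :=
  parallel_iff_isLeft_eq.2 ⟨hg.isLeft_eq.2.symm, hxy⟩

lemma Between.parallel_left (hg : Between x y g) (hgx : g ≠ x) : Parallel x g :=
  parallel_iff_isLeft_eq.2 ⟨hg.isLeft_eq.1.symm, hgx.symm⟩

lemma Between.orthogonal_iff (hg : Between x y g) : Orthogonal g z ↔ Orthogonal x z := by
  rw [orthogonal_iff_isLeft_ne, orthogonal_iff_isLeft_ne, hg.isLeft_eq.1]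

lemma Parallel.symm (hxy : Parallel x y) : Parallel y x :=
  let ⟨hkind, hne⟩ := parallel_iff_isLeft_eq.1 hxy
  parallel_iff_isLeft_eq.2 ⟨hkind.symm, hne.symm⟩

lemma Parallel.orthogonal_iff (hxy : Parallel x y) : Orthogonal x z ↔ Orthogonal y z := by
  rw [orthogonal_iff_isLeft_ne, orthogonal_iff_isLeft_ne, (parallel_iff_isLeft_eq.1 hxy).1]

lemma IsLink.symm {R : Coll m n → Coll m n → Prop} (hxy : Parallel x y) (hz : IsLink R x y z) :
    IsLink R y x z :=
  ⟨hxy.orthogonal_iff.1 hz.1, hz.2.symm⟩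

lemma IsGap.symm {R : Coll m n → Coll m n → Prop} (hg : IsGap R x y g) : IsGap R y x g :=
  ⟨hg.1.symm, hg.2.2, hg.2.1⟩

end Collisions

namespace IsGoodRect

variable {m n : ℕ} {P R S : Coll m n → Coll m n → Prop} {a b g u v x y : Coll m n}

lemma exists_isGap (hP : IsGoodRect P) (hxy : Parallel x y) (hnxy : ¬ P x y) (hnyx : ¬ P y x) :
    ∃ g, IsGap P x y g := by
  by_contra hng
  exact not_or.2 ⟨hnxy, hnyx⟩ ((hP.par x y hxy).2 (Or.inr hng))

/-- Above a counterexample `g` there is a strictly larger one (a gap between `g` and an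
endpoint incomparable with it), contradicting finiteness. -/
theorem le_or_le_of_between (hP : IsGoodRect P) (hab : P a b) (hpar : Parallel a b)
    (hnl : ¬ ∃ z, IsLink P a b z) (hg : Between a b g) : P g a ∨ P g b := by
  have hnogap : ¬ ∃ h, IsGap P a b h := ((hP.par a b hpar).1 (Or.inl hab)).resolve_left hnl
  let Bad : Set (Coll m n) := {g | Between a b g ∧ ¬ P g a ∧ ¬ P g b}
  have climb : ∀ g ∈ Bad, ∀ c, (c = a ∨ c = b) → ¬ P c g → ∃ h ∈ Bad, StrictR P g h := by
    rintro g ⟨hg, hga, hgb⟩ c hc hcg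
    have hgc : ¬ P g c := by rcases hc with rfl | rfl <;> assumption
    have hcg' : Parallel c g := by
      have hne : g ≠ c := by rintro rfl; exact hgc (hP.refl g)
      rcases hc with rfl | rfl
      exacts [hg.parallel_left hne, hg.symm.parallel_left hne]
    obtain ⟨h, hch, -, hgh⟩ := hP.exists_isGap hcg' hcg hgc
    refine ⟨h, ⟨?_, fun hha => hga (hP.trans _ _ _ hgh.1 hha),
      fun hhb => hgb (hP.trans _ _ _ hgh.1 hhb)⟩, hgh⟩
    rcases hc with rfl | rfl
    exacts [hg.trans_left hch, (hg.symm.trans_left hch).symm]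
  by_contra! hcon
  obtain ⟨g, hbad, hmax⟩ :=
    exists_maximal_of_refl_of_trans (s := Bad) hP.refl hP.trans ⟨g, hg, hcon⟩
  obtain ⟨h, hbad', hgh⟩ : ∃ h ∈ Bad, StrictR P g h := by
    by_cases hag : P a g
    · exact climb g hbad b (Or.inr rfl) fun hbg =>
        hnogap ⟨g, hbad.1, ⟨hag, hbad.2.1⟩, ⟨hbg, hbad.2.2⟩⟩
    · exact climb g hbad a (Or.inl rfl) hag
  exact hgh.2 (hmax h hbad' hgh.1)

theorem reflTransGen_of_step_between (hR : IsGoodRect R) (hRS : R ≤ S)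
    (hxu : ReflTransGen S x u) (huv : R u v) (hvy : ReflTransGen S v y)
    (hx : Between x y g) (hg : Between u v g) (hnl : ¬ ∃ z, IsLink (ReflTransGen S) x y z) :
    ReflTransGen S g y := by
  by_cases hu : u = v
  · subst hu
    rwa [hg.eq_of_self]
  have hpar := hg.parallel hu
  by_cases hl : ∃ z, IsLink R u v z
  · obtain ⟨z, hz, hzuv⟩ := hl
    refine absurd ⟨z, hx.orthogonal_iff.1 (hg.orthogonal_iff.2 hz), Or.inl ?_⟩ hnl
    rcases hzuv with ⟨huz, hzv⟩ | ⟨hvz, hzu⟩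
    · exact ⟨hxu.tail (hRS _ _ huz), hvy.head (hRS _ _ hzv)⟩
    · exact ⟨(hxu.tail (hRS _ _ huv)).tail (hRS _ _ hvz),
        (hvy.head (hRS _ _ huv)).head (hRS _ _ hzu)⟩
  · rcases hR.le_or_le_of_between huv hpar hl hg with hgu | hgv
    · exact (hvy.head (hRS _ _ huv)).head (hRS _ _ hgu)
    · exact hvy.head (hRS _ _ hgv)

end IsGoodRect

section Join

variable {m n : ℕ} {P Q S : Coll m n → Coll m n → Prop} {g x y : Coll m n}

theorem Relation.ReflTransGen.exists_step_over (hxy : ReflTransGen S x y) (hg : Between x y g) :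
    (∃ z, Orthogonal g z ∧ ReflTransGen S x z ∧ ReflTransGen S z y) ∨
      (∃ u v, S u v ∧ ReflTransGen S x u ∧ ReflTransGen S v y ∧ Between u v g) ∨ g = y := by
  induction hxy using ReflTransGen.head_induction_on generalizing g with
  | refl => exact Or.inr (Or.inr hg.eq_of_self)
  | @head a c hac hcy ih =>
    rcases hg.split c with hz | hg' | hg'
    · exact Or.inl ⟨c, hg.orthogonal_iff.2 hz, .single hac, hcy⟩
    · exact Or.inr (Or.inl ⟨a, c, hac, .refl, hcy, hg'⟩)
    · rcases ih hg' with ⟨z, hz, hcz, hzy⟩ | ⟨u, v, huv, hcu, hvy, hguv⟩ | rfl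
      · exact Or.inl ⟨z, hz, hcz.head hac, hzy⟩
      · exact Or.inr (Or.inl ⟨u, v, huv, hcu.head hac, hvy, hguv⟩)
      · exact Or.inr (Or.inr rfl)

theorem reflTransGen_sup_of_between (hP : IsGoodRect P) (hQ : IsGoodRect Q)
    (hxy : ReflTransGen (P ⊔ Q) x y) (hnl : ¬ ∃ z, IsLink (ReflTransGen (P ⊔ Q)) x y z)
    (hg : Between x y g) : ReflTransGen (P ⊔ Q) g y := by
  rcases hxy.exists_step_over hg with ⟨z, hz, hxz, hzy⟩ | ⟨u, v, huv, hxu, hvy, hguv⟩ | rfl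
  · exact absurd ⟨z, hg.orthogonal_iff.1 hz, Or.inl ⟨hxz, hzy⟩⟩ hnl
  · rcases huv with huv | huv
    · exact hP.reflTransGen_of_step_between le_sup_left hxu huv hvy hg hguv hnl
    · exact hQ.reflTransGen_of_step_between le_sup_right hxu huv hvy hg hguv hnl
  · exact .refl

theorem link_or_no_gap_reflTransGen_sup (hP : IsGoodRect P) (hQ : IsGoodRect Q)
    (hxy : ReflTransGen (P ⊔ Q) x y) :
    (∃ z, IsLink (ReflTransGen (P ⊔ Q)) x y z) ∨ ¬ ∃ g, IsGap (ReflTransGen (P ⊔ Q)) x y g :=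
  or_iff_not_imp_left.2 fun hnl ⟨_, hg, _, _, hgy⟩ =>
    hgy (reflTransGen_sup_of_between hP hQ hxy hnl hg)

theorem IsGoodRect.reflTransGen_sup (hP : IsGoodRect P) (hQ : IsGoodRect Q) :
    IsGoodRect (ReflTransGen (P ⊔ Q)) where
  refl _ := .refl
  trans _ _ _ := ReflTransGen.trans
  orth x y hxy := (hP.orth x y hxy).imp (.single <| .inl ·) (.single <| .inl ·)
  par x y hpar := by
    constructor
    · rintro (hxy | hyx)
      · exact link_or_no_gap_reflTransGen_sup hP hQ hxy
      · exact (link_or_no_gap_reflTransGen_sup hP hQ hyx).imp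
          (fun ⟨z, hz⟩ => ⟨z, hz.symm hpar.symm⟩) fun hng ⟨g, hg⟩ => hng ⟨g, hg.symm⟩
    · rintro (⟨z, -, ⟨hxz, hzy⟩ | ⟨hyz, hzx⟩⟩ | hng)
      · exact .inl (hxz.trans hzy)
      · exact .inr (hyz.trans hzx)
      · by_contra! hinc
        have hPT : P ≤ ReflTransGen (P ⊔ Q) := fun _ _ h => .single (.inl h)
        obtain ⟨g, hg, ⟨hxg, -⟩, ⟨hyg, -⟩⟩ := hP.exists_isGap hpar
          (fun h => hinc.1 (hPT _ _ h)) (fun h => hinc.2 (hPT _ _ h))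
        exact hng ⟨g, hg, ⟨hPT _ _ hxg, fun hgx => hinc.2 ((hPT _ _ hyg).trans hgx)⟩,
          ⟨hPT _ _ hyg, fun hgy => hinc.1 ((hPT _ _ hxg).trans hgy)⟩⟩

end Join

namespace GoodRect

variable {m n : ℕ}

instance : Finite (GoodRect m n) := Subtype.finite

noncomputable instance : SemilatticeSup (GoodRect m n) where
  sup P Q := ⟨ReflTransGen (P.1 ⊔ Q.1), P.2.reflTransGen_sup Q.2⟩
  le_sup_left _ _ _ _ h := .single (.inl h)
  le_sup_right _ _ _ _ h := .single (.inr h)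
  sup_le P Q U hPU hQU x y h := by
    induction h with
    | refl => exact U.2.refl x
    | tail _ hst ih => exact U.2.trans _ _ _ ih (hst.elim (hPU _ _) (hQU _ _))

end GoodRect

/-- `C(m,n)` with a formal minimal element adjoined is a lattice: any two elements have a
join (least upper bound) and a meet (greatest lower bound). -/
theorem constrainahedron_lattice (m n : ℕ) (a b : WithBot (GoodRect m n)) :
    (∃ j : WithBot (GoodRect m n), IsLUB {a, b} j) ∧
    (∃ k : WithBot (GoodRect m n), IsGLB {a, b} k) :=
  ⟨⟨a ⊔ b, isLUB_pair⟩, exists_isGLB_of_finite _⟩
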